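/- Let G' be a simple graph with an acyclic proper edge coloring c, let u be a vertex, and let i, j be neighbors of u. Suppose (1) c(u,i) does not appear on any edge incident to j other than uj, and c(u,j) does not appear on any edge incident to i other than ui; and (2) for every neighbor z of u with z ∉ {i, j}, the color c(u,z) appears neither on any edge incident to i other than ui nor on any edge incident to j other than uj. Then the coloring c' obtained from c by exchanging the colors of edges ui and uj is an acyclic proper edge coloring of G'. -/

import Mathlib

/-- A proper edge coloring: distinct edges of `G` sharing a vertex get distinct colors. -/
def ProperEdgeColoring {V : Type*} (G : SimpleGraph V) (c : Sym2 V → ℕ) : Prop :=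
  ∀ e₁ ∈ G.edgeSet, ∀ e₂ ∈ G.edgeSet, e₁ ≠ e₂ → (∃ v : V, v ∈ e₁ ∧ v ∈ e₂) → c e₁ ≠ c e₂

/-- An acyclic proper edge coloring: proper, and no cycle of `G` uses only two colors. -/
def AcyclicProperEdgeColoring {V : Type*} (G : SimpleGraph V) (c : Sym2 V → ℕ) : Prop :=
  ProperEdgeColoring G c ∧
    ∀ (v : V) (p : G.Walk v v), p.IsCycle →
      ¬ ∃ α β : ℕ, ∀ e ∈ p.edges, c e = α ∨ c e = β

/-- The set of colors appearing on edges of `G` incident to `u`. -/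
def incidentColors {V : Type*} (G : SimpleGraph V) (c : Sym2 V → ℕ) (u : V) : Set ℕ :=
  {γ : ℕ | ∃ v : V, G.Adj u v ∧ c s(u, v) = γ}

/-- An (α,β)-bichromatic path: a path all of whose edges are colored α or β. -/
def IsBichromaticPath {V : Type*} (G : SimpleGraph V) (c : Sym2 V → ℕ) (α β : ℕ)
    {a b : V} (p : G.Walk a b) : Prop :=
  p.IsPath ∧ ∀ e ∈ p.edges, c e = α ∨ c e = β

/-- A maximal (α,β)-bichromatic path: it cannot be extended at either endpoint. -/
def IsMaximalBichromaticPath {V : Type*} (G : SimpleGraph V) (c : Sym2 V → ℕ) (α β : ℕ)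
    {a b : V} (p : G.Walk a b) : Prop :=
  IsBichromaticPath G c α β p ∧
    (∀ w : V, G.Adj a w → (c s(a, w) = α ∨ c s(a, w) = β) → s(a, w) ∈ p.edges) ∧
    (∀ w : V, G.Adj b w → (c s(b, w) = α ∨ c s(b, w) = β) → s(b, w) ∈ p.edges)

/-- An (α,β,ab)-critical path: a maximal (α,β)-bichromatic path from `a` to `b`
whose edges incident to the endpoints are colored α. -/
def IsCriticalPath {V : Type*} (G : SimpleGraph V) (c : Sym2 V → ℕ) (α β : ℕ)
    {a b : V} (p : G.Walk a b) : Prop :=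
  IsMaximalBichromaticPath G c α β p ∧
    (∀ e ∈ p.edges, a ∈ e → c e = α) ∧ (∀ e ∈ p.edges, b ∈ e → c e = α)


/-!
The exchanged colouring is `c ∘ Equiv.swap (ui) (uj)`. Hypothesis (1) says each of the two colours
is free at the edge it moves to, which keeps the colouring proper. A cycle containing both or
neither of `ui`, `uj` sees the same colours as before, hence is not two-coloured. A cycle through
`ui` only also passes through some `uz` and some `iw` with `z ≠ i, j` and `w ≠ u`: the colours
`c(uj)`, `c(uz)`, `c(iw)` then all occur on it, and they are pairwise distinct by properness,
(1) and (2). The case of `uj` only is symmetric.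
-/

open SimpleGraph Walk

lemma SimpleGraph.Walk.IsCycle.exists_ne_mem_edges {V : Type*} {G : SimpleGraph V} {v a b : V}
    {p : G.Walk v v} (hp : p.IsCycle) (h : s(a, b) ∈ p.edges) :
    ∃ w, b ≠ w ∧ s(a, w) ∈ p.edges := by
  simpa only [Subgraph.spanningCoe_adj, adj_toSubgraph_iff_mem_edges] using
    hp.isCycles_spanningCoe_toSubgraph.other_adj_of_adj (adj_toSubgraph_iff_mem_edges.mpr h)

section ColorExchange

variable {V : Type*} {G : SimpleGraph V} {c : Sym2 V → ℕ}

lemma ProperEdgeColoring.apply_ne_of_adjacent (hc : ProperEdgeColoring G c) {u i j : V}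
    (huj : G.Adj u j) (hi : ∀ w, G.Adj i w → w ≠ u → c s(i, w) ≠ c s(u, j)) :
    ∀ f ∈ G.edgeSet, f ≠ s(u, i) → f ≠ s(u, j) → (∃ v, v ∈ s(u, i) ∧ v ∈ f) →
      c f ≠ c s(u, j) := by
  rintro f hf hfi hfj ⟨v, hv, hvf⟩
  obtain ⟨w, rfl⟩ := Sym2.mem_iff_exists.mp hvf
  rcases Sym2.mem_iff.mp hv with rfl | rfl
  · exact hc _ hf _ huj hfj ⟨v, Sym2.mem_mk_left _ _, Sym2.mem_mk_left _ _⟩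
  · exact hi w hf fun hwu => hfi (hwu ▸ Sym2.eq_swap)

variable [DecidableEq V]

lemma ProperEdgeColoring.comp_swap (hc : ProperEdgeColoring G c) {e₁ e₂ : Sym2 V}
    (h₁ : ∀ f ∈ G.edgeSet, f ≠ e₁ → f ≠ e₂ → (∃ v, v ∈ e₁ ∧ v ∈ f) → c f ≠ c e₂)
    (h₂ : ∀ f ∈ G.edgeSet, f ≠ e₂ → f ≠ e₁ → (∃ v, v ∈ e₂ ∧ v ∈ f) → c f ≠ c e₁) :
    ProperEdgeColoring G (c ∘ Equiv.swap e₁ e₂) := by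
  intro f hf g hg hfg hshare
  have hshare' : ∃ v, v ∈ g ∧ v ∈ f := hshare.imp fun _ => And.symm
  simp only [Function.comp_apply, Equiv.swap_apply_def]
  split_ifs <;> subst_vars
  · exact absurd rfl hfg
  · exact hc _ hg _ hf (Ne.symm hfg) hshare'
  · exact (h₁ g hg ‹_› ‹_› hshare).symm
  · exact hc _ hg _ hf (Ne.symm hfg) hshare'
  · exact absurd rfl hfg
  · exact (h₂ g hg ‹_› ‹_› hshare).symm
  · exact h₁ f hf ‹_› ‹_› hshare'
  · exact h₂ f hf ‹_› ‹_› hshare'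
  · exact hc f hf g hg hfg hshare

lemma twoColored_of_comp_swap {e₁ e₂ : Sym2 V} {l : List (Sym2 V)} (hl : e₁ ∈ l ↔ e₂ ∈ l)
    {α β : ℕ} (h : ∀ e ∈ l, c (Equiv.swap e₁ e₂ e) = α ∨ c (Equiv.swap e₁ e₂ e) = β) :
    ∀ e ∈ l, c e = α ∨ c e = β := by
  intro e he
  have hswap : Equiv.swap e₁ e₂ e ∈ l := by
    rw [Equiv.swap_apply_def]
    split_ifs with h₁ h₂
    · exact hl.mp (h₁ ▸ he)
    · exact hl.mpr (h₂ ▸ he)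
    · exact he
  simpa only [Equiv.swap_apply_self] using h _ hswap

lemma not_twoColored_comp_swap_of_mem_of_not_mem (hc : ProperEdgeColoring G c) {u i j : V}
    (huj : G.Adj u j) (hi : ∀ w, G.Adj i w → w ≠ u → c s(i, w) ≠ c s(u, j))
    (hz : ∀ z, G.Adj u z → z ≠ i → z ≠ j → ∀ w, G.Adj i w → w ≠ u → c s(i, w) ≠ c s(u, z))
    {v : V} {p : G.Walk v v} (hp : p.IsCycle) (hpi : s(u, i) ∈ p.edges)
    (hpj : s(u, j) ∉ p.edges) (α β : ℕ) :
    ¬ ∀ e ∈ p.edges, (c ∘ Equiv.swap s(u, i) s(u, j)) e = α ∨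
      (c ∘ Equiv.swap s(u, i) s(u, j)) e = β := by
  intro hαβ
  obtain ⟨z, hiz, hpz⟩ := hp.exists_ne_mem_edges hpi
  obtain ⟨w, huw, hpw⟩ := hp.exists_ne_mem_edges (Sym2.eq_swap ▸ hpi : s(i, u) ∈ p.edges)
  have hzj : z ≠ j := by rintro rfl; exact hpj hpz
  have huz : G.Adj u z := p.adj_of_mem_edges hpz
  have hiw : G.Adj i w := p.adj_of_mem_edges hpw
  have hcj := hαβ _ hpi
  have hcz := hαβ _ hpz
  have hcw := hαβ _ hpw
  have hz_ne_i : s(u, z) ≠ s(u, i) := fun h => hiz (Sym2.congr_right.mp h).symm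
  have hz_ne_j : s(u, z) ≠ s(u, j) := fun h => hpj (h ▸ hpz)
  have hw_ne_i : s(i, w) ≠ s(u, i) := fun h =>
    huw (Sym2.congr_right.mp (h.trans Sym2.eq_swap)).symm
  have hw_ne_j : s(i, w) ≠ s(u, j) := fun h => hpj (h ▸ hpw)
  simp only [Function.comp_apply, Equiv.swap_apply_left] at hcj
  simp only [Function.comp_apply, Equiv.swap_apply_of_ne_of_ne hz_ne_i hz_ne_j] at hcz
  simp only [Function.comp_apply, Equiv.swap_apply_of_ne_of_ne hw_ne_i hw_ne_j] at hcw
  have hcz_ne : c s(u, z) ≠ c s(u, j) :=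
    hc _ huz _ huj (fun h => hzj (Sym2.congr_right.mp h))
      ⟨u, Sym2.mem_mk_left _ _, Sym2.mem_mk_left _ _⟩
  have hcw_ne : c s(i, w) ≠ c s(u, j) := hi w hiw huw.symm
  exact hz z huz hiz.symm hzj w hiw huw.symm (by omega)

end ColorExchange

/-- **Fact 4.**  Let `i, j` be neighbors of `u`.  Assume (1) `c(u,i)` appears on
no edge incident to `j` other than `uj` and `c(u,j)` appears on no edge incident
to `i` other than `ui`; and (2) for every neighbor `z` of `u` with `z ∉ {i, j}`,
the color `c(u,z)` appears on no edge incident to `i` other than `ui` and on no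
edge incident to `j` other than `uj`.  Then the coloring `c'` obtained by
exchanging the colors of `ui` and `uj` is an acyclic proper edge coloring. -/
theorem color_exchange_valid {V : Type*} [DecidableEq V]
    (G' : SimpleGraph V) (c : Sym2 V → ℕ)
    (hc : AcyclicProperEdgeColoring G' c)
    (u i j : V) (hui : G'.Adj u i) (huj : G'.Adj u j)
    (h1i : ∀ w : V, G'.Adj j w → w ≠ u → c s(j, w) ≠ c s(u, i))
    (h1j : ∀ w : V, G'.Adj i w → w ≠ u → c s(i, w) ≠ c s(u, j))
    (h2 : ∀ z : V, G'.Adj u z → z ≠ i → z ≠ j →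
      (∀ w : V, G'.Adj i w → w ≠ u → c s(i, w) ≠ c s(u, z)) ∧
      (∀ w : V, G'.Adj j w → w ≠ u → c s(j, w) ≠ c s(u, z))) :
    AcyclicProperEdgeColoring G'
      (fun e => if e = s(u, i) then c s(u, j)
                else if e = s(u, j) then c s(u, i) else c e) := by
  have hswap : (fun e => if e = s(u, i) then c s(u, j)
      else if e = s(u, j) then c s(u, i) else c e) = c ∘ Equiv.swap s(u, i) s(u, j) := by
    funext e
    simp only [Function.comp_apply, Equiv.swap_apply_def, apply_ite c]
  rw [hswap]
  refine ⟨hc.1.comp_swap (hc.1.apply_ne_of_adjacent huj h1j)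
    (hc.1.apply_ne_of_adjacent hui h1i), ?_⟩
  rintro v p hp ⟨α, β, hαβ⟩
  by_cases hpi : s(u, i) ∈ p.edges <;> by_cases hpj : s(u, j) ∈ p.edges
  · exact hc.2 v p hp ⟨α, β, twoColored_of_comp_swap (iff_of_true hpi hpj) hαβ⟩
  · exact not_twoColored_comp_swap_of_mem_of_not_mem hc.1 huj h1j
      (fun z hz hzi hzj => (h2 z hz hzi hzj).1) hp hpi hpj α β hαβ
  · rw [Equiv.swap_comm] at hαβ
    exact not_twoColored_comp_swap_of_mem_of_not_mem hc.1 hui h1i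
      (fun z hz hzj hzi => (h2 z hz hzi hzj).2) hp hpj hpi α β hαβ
  · exact hc.2 v p hp ⟨α, β, twoColored_of_comp_swap (iff_of_false hpi hpj) hαβ⟩
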